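/- The jump operation is monotone with respect to strong Weihrauch reducibility: f ≤_sW f′ for every problem f, and f ≤_sW g implies f′ ≤_sW g′. -/

import Mathlib

open scoped Classical

/-! ## Basic notions of Weihrauch complexity -/

/-- The finite prefix of length `m` of a point of Baire space, as a list. -/
def pref (p : ℕ → ℕ) (m : ℕ) : List ℕ := List.ofFn (fun i : Fin m => p i)

/-- Type-2 computability of a partial function on Baire space, defined via monotone
computable word functions producing longer and longer prefixes of the output. -/
def BaireComputable (F : (ℕ → ℕ) →. (ℕ → ℕ)) : Prop :=
  ∃ ψ : List ℕ → List ℕ, Computable ψ ∧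
    (∀ u v : List ℕ, u <+: v → ψ u <+: ψ v) ∧
    ∀ p q, q ∈ F p → ∀ n, ∃ m, (ψ (pref p m))[n]? = some (q n)

/-- The interleaving pairing `⟨p,q⟩` on Baire space. -/
def pairB (p q : ℕ → ℕ) : ℕ → ℕ := fun n => if n % 2 = 0 then p (n / 2) else q (n / 2)

def evenPart (r : ℕ → ℕ) : ℕ → ℕ := fun n => r (2 * n)

def oddPart (r : ℕ → ℕ) : ℕ → ℕ := fun n => r (2 * n + 1)

/-- The `i`-th component of the countable tupling `⟨p₀,p₁,…⟩⟨i,k⟩ = pᵢ(k)`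
(using the Cantor pairing). -/
def proj (r : ℕ → ℕ) (i : ℕ) : ℕ → ℕ := fun k => r (Nat.pair i k)

/-- A represented space: a set `X` together with a surjective partial map
from Baire space onto `X`. -/
structure RepSp (X : Type*) where
  δ : (ℕ → ℕ) →. X
  surj : ∀ x : X, ∃ p, x ∈ δ p

theorem mem_part_mk {α : Type*} {D : Prop} {g : D → α} {a : α} (h : D) (e : g h = a) :
    a ∈ Part.mk D g := Part.mem_mk_iff.mpr ⟨h, e⟩

/-- The identity representation of Baire space. -/
def repBaire : RepSp (ℕ → ℕ) where
  δ := fun p => Part.some p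
  surj := fun p => ⟨p, Part.mem_some p⟩

/-- The standard representation of the natural numbers. -/
def repNat : RepSp ℕ where
  δ := fun p => Part.some (p 0)
  surj := fun n => ⟨fun _ => n, Part.mem_some n⟩

/-- `F` is a realizer of the problem `f :⊆ X ⇉ Y` (a problem is a multi-valued
function `f : X → Set Y`, whose domain is the set of `x` with `f x` nonempty). -/
def Realizes {X Y : Type*} (δX : RepSp X) (δY : RepSp Y)
    (f : X → Set Y) (F : (ℕ → ℕ) →. (ℕ → ℕ)) : Prop :=
  ∀ p x, x ∈ δX.δ p → (f x).Nonempty → ∃ q ∈ F p, ∃ y ∈ δY.δ q, y ∈ f x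

/-- Weihrauch reducibility: `f ≤_W g` iff there are computable `H, K` such that
`p ↦ H⟨p, G(K(p))⟩` realizes `f` whenever `G` realizes `g`. -/
def WRed {X Y Z W : Type*} (δX : RepSp X) (δY : RepSp Y) (δZ : RepSp Z) (δW : RepSp W)
    (f : X → Set Y) (g : Z → Set W) : Prop :=
  ∃ H K : (ℕ → ℕ) →. (ℕ → ℕ), BaireComputable H ∧ BaireComputable K ∧
    ∀ G : (ℕ → ℕ) →. (ℕ → ℕ), Realizes δZ δW g G →
      Realizes δX δY f
        (fun p => (K p).bind fun r => (G r).bind fun q => H (pairB p q))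

/-- Strong Weihrauch reducibility: `f ≤_sW g` iff there are computable `H, K`
such that `H ∘ G ∘ K` realizes `f` whenever `G` realizes `g`. -/
def SWRed {X Y Z W : Type*} (δX : RepSp X) (δY : RepSp Y) (δZ : RepSp Z) (δW : RepSp W)
    (f : X → Set Y) (g : Z → Set W) : Prop :=
  ∃ H K : (ℕ → ℕ) →. (ℕ → ℕ), BaireComputable H ∧ BaireComputable K ∧
    ∀ G : (ℕ → ℕ) →. (ℕ → ℕ), Realizes δZ δW g G →
      Realizes δX δY f (fun p => (K p).bind fun r => (G r).bind fun q => H q)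

/-- Weihrauch equivalence. -/
def WEquiv {X Y Z W : Type*} (δX : RepSp X) (δY : RepSp Y) (δZ : RepSp Z) (δW : RepSp W)
    (f : X → Set Y) (g : Z → Set W) : Prop :=
  WRed δX δY δZ δW f g ∧ WRed δZ δW δX δY g f

/-- Strong Weihrauch equivalence. -/
def SWEquiv {X Y Z W : Type*} (δX : RepSp X) (δY : RepSp Y) (δZ : RepSp Z) (δW : RepSp W)
    (f : X → Set Y) (g : Z → Set W) : Prop :=
  SWRed δX δY δZ δW f g ∧ SWRed δZ δW δX δY g f

/-- The identity problem on Baire space. -/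
def idProblem : (ℕ → ℕ) → Set (ℕ → ℕ) := fun p => {p}

/-! ## Constructions on representations and problems -/

/-- Representation of the product of two represented spaces. -/
def prodRep {X Z : Type*} (δX : RepSp X) (δZ : RepSp Z) : RepSp (X × Z) where
  δ := fun r => (δX.δ (evenPart r)).bind fun x => (δZ.δ (oddPart r)).map fun z => (x, z)
  surj := by
    intro xz
    obtain ⟨p, hp⟩ := δX.surj xz.1
    obtain ⟨q, hq⟩ := δZ.surj xz.2
    have he : evenPart (pairB p q) = p := by
      funext n
      have h1 : (2 * n) % 2 = 0 := by omega
      have h2 : (2 * n) / 2 = n := by omega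
      simp [evenPart, pairB, h1, h2]
    have ho : oddPart (pairB p q) = q := by
      funext n
      have h1 : ¬((2 * n + 1) % 2 = 0) := by omega
      have h2 : (2 * n + 1) / 2 = n := by omega
      simp [oddPart, pairB, h1, h2]
    refine ⟨pairB p q, Part.mem_bind_iff.mpr ⟨xz.1, by rw [he]; exact hp,
      (Part.mem_map_iff _).mpr ⟨xz.2, by rw [ho]; exact hq, rfl⟩⟩⟩

/-- The product `f × g` of two problems. -/
def prodProblem {X Y Z W : Type*} (f : X → Set Y) (g : Z → Set W) :
    X × Z → Set (Y × W) :=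
  fun xz => f xz.1 ×ˢ g xz.2

/-- Representation of the disjoint union of two represented spaces. -/
def sumRep {X Z : Type*} (δX : RepSp X) (δZ : RepSp Z) : RepSp (X ⊕ Z) where
  δ := fun r =>
    if r 0 = 0 then (δX.δ fun n => r (n + 1)).map Sum.inl
    else if r 0 = 1 then (δZ.δ fun n => r (n + 1)).map Sum.inr
    else Part.none
  surj := by
    rintro (x | z)
    · obtain ⟨p, hp⟩ := δX.surj x
      refine ⟨fun n => Nat.casesOn n 0 p, ?_⟩
      show Sum.inl x ∈ (δX.δ p).map Sum.inl
      exact (Part.mem_map_iff _).mpr ⟨x, hp, rfl⟩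
    · obtain ⟨p, hp⟩ := δZ.surj z
      refine ⟨fun n => Nat.casesOn n 1 p, ?_⟩
      show Sum.inr z ∈ (δZ.δ p).map Sum.inr
      exact (Part.mem_map_iff _).mpr ⟨z, hp, rfl⟩

/-- The coproduct `f ⊔ g` of two problems. -/
def coprodProblem {X Y Z W : Type*} (f : X → Set Y) (g : Z → Set W) :
    X ⊕ Z → Set (Y ⊕ W)
  | Sum.inl x => Sum.inl '' f x
  | Sum.inr z => Sum.inr '' g z

/-- The meet `f ⊓ g` of two problems. -/
def meetProblem {X Y Z W : Type*} (f : X → Set Y) (g : Z → Set W) :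
    X × Z → Set (Y ⊕ W) :=
  fun xz => Sum.inl '' f xz.1 ∪ Sum.inr '' g xz.2

/-- Representation of the space of sequences `X^ℕ` via the countable tupling. -/
noncomputable def seqRep {X : Type*} (δX : RepSp X) : RepSp (ℕ → X) where
  δ := fun r => Part.mk (∀ i : ℕ, ∃ x, x ∈ δX.δ (proj r i))
    (fun h i => Classical.choose (h i))
  surj := by
    intro x
    choose p hp using fun i => δX.surj (x i)
    refine ⟨fun m => p (Nat.unpair m).1 (Nat.unpair m).2, ?_⟩
    have hproj : ∀ i, proj (fun m => p (Nat.unpair m).1 (Nat.unpair m).2) i = p i := by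
      intro i; funext k; simp [proj]
    have hdom : ∀ i : ℕ, ∃ y, y ∈ δX.δ (proj (fun m => p (Nat.unpair m).1 (Nat.unpair m).2) i) :=
      fun i => ⟨x i, by rw [hproj i]; exact hp i⟩
    refine mem_part_mk hdom ?_
    funext i
    exact Part.mem_unique (Classical.choose_spec (hdom i)) (by rw [hproj i]; exact hp i)

/-- The parallelization `f̂` of a problem. -/
def parallelProblem {X Y : Type*} (f : X → Set Y) : (ℕ → X) → Set (ℕ → Y) :=
  fun x => {y | ∀ i, y i ∈ f (x i)}

/-- Representation of the finite power `Xⁿ` via the countable tupling. -/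
noncomputable def finProdRep (n : ℕ) {X : Type*} (δX : RepSp X) : RepSp (Fin n → X) where
  δ := fun r => Part.mk (∀ i : Fin n, ∃ x, x ∈ δX.δ (proj r i))
    (fun h i => Classical.choose (h i))
  surj := by
    intro x
    choose p hp using fun i => δX.surj (x i)
    classical
    refine ⟨fun m => if h : (Nat.unpair m).1 < n then p ⟨_, h⟩ (Nat.unpair m).2 else 0, ?_⟩
    have hproj : ∀ i : Fin n,
        proj (fun m => if h : (Nat.unpair m).1 < n then p ⟨_, h⟩ (Nat.unpair m).2 else 0) i
          = p i := by
      intro i; funext k; simp [proj, i.isLt]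
    have hdom : ∀ i : Fin n, ∃ y, y ∈ δX.δ
        (proj (fun m => if h : (Nat.unpair m).1 < n then p ⟨_, h⟩ (Nat.unpair m).2 else 0) i) :=
      fun i => ⟨x i, by rw [hproj i]; exact hp i⟩
    refine mem_part_mk hdom ?_
    funext i
    exact Part.mem_unique (Classical.choose_spec (hdom i)) (by rw [hproj i]; exact hp i)

/-- The `n`-fold product `fⁿ` of a problem with itself. -/
def finProdProblem (n : ℕ) {X Y : Type*} (f : X → Set Y) :
    (Fin n → X) → Set (Fin n → Y) :=
  fun x => {y | ∀ i, y i ∈ f (x i)}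

/-- Representation of the space `X*` of words over `X`. -/
noncomputable def starRep {X : Type*} (δX : RepSp X) : RepSp (Σ n : ℕ, Fin n → X) where
  δ := fun r => Part.mk (∀ i : Fin (r 0), ∃ x, x ∈ δX.δ (proj (fun m => r (m + 1)) i))
    (fun h => ⟨r 0, fun i => Classical.choose (h i)⟩)
  surj := by
    rintro ⟨n, x⟩
    choose p hp using fun i => δX.surj (x i)
    classical
    have hproj : ∀ i : Fin n,
        proj (fun m' => if h : (Nat.unpair m').1 < n then p ⟨_, h⟩ (Nat.unpair m').2 else 0) i
          = p i := by
      intro i; funext k; simp [proj, i.isLt]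
    have hdom : ∀ i : Fin n, ∃ y, y ∈ δX.δ
        (proj (fun m' => if h : (Nat.unpair m').1 < n then p ⟨_, h⟩ (Nat.unpair m').2 else 0) i) :=
      fun i => ⟨x i, by rw [hproj i]; exact hp i⟩
    refine ⟨fun m => Nat.casesOn m n
      (fun m' => if h : (Nat.unpair m').1 < n then p ⟨_, h⟩ (Nat.unpair m').2 else 0),
      Part.mem_mk_iff.mpr ⟨hdom, ?_⟩⟩
    have hx : (fun i : Fin n => Classical.choose (hdom i)) = x := funext fun i =>
      Part.mem_unique (Classical.choose_spec (hdom i)) (by rw [hproj i]; exact hp i)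
    exact congrArg (Sigma.mk n) hx

/-- The finite parallelization `f*` of a problem. -/
def starProblem {X Y : Type*} (f : X → Set Y) :
    (Σ n : ℕ, Fin n → X) → Set (Σ n : ℕ, Fin n → Y) :=
  fun x => {y | ∃ e : x.1 = y.1, ∀ i : Fin x.1, y.2 (Fin.cast e i) ∈ f (x.2 i)}

/-- Representation of a countable disjoint union of represented spaces. -/
def csumRep {Z : ℕ → Type*} (δZ : ∀ i, RepSp (Z i)) : RepSp (Σ i, Z i) where
  δ := fun r => ((δZ (r 0)).δ (fun n => r (n + 1))).map fun z => ⟨r 0, z⟩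
  surj := by
    rintro ⟨i, z⟩
    obtain ⟨p, hp⟩ := (δZ i).surj z
    exact ⟨fun n => Nat.casesOn n i p, (Part.mem_map_iff _).mpr ⟨z, hp, rfl⟩⟩

/-- The countable coproduct `⊔ᵢ gᵢ` of a sequence of problems. -/
def csumProblem {Z W : ℕ → Type*} (g : ∀ i, Z i → Set (W i)) :
    (Σ i, Z i) → Set (Σ i, W i) :=
  fun x => Sigma.mk x.1 '' g x.1 x.2

/-! ## Limits and jumps -/

/-- The limit map on Baire space, as a (single-valued) problem:
`lim⟨p₀,p₁,…⟩` is the pointwise limit of the sequence `(pₙ)ₙ`. -/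
def limProblem : (ℕ → ℕ) → Set (ℕ → ℕ) :=
  fun r => {q | ∀ n, ∃ N, ∀ m, N ≤ m → proj r m n = q n}

/-- The limit map on Baire space as a partial (single-valued) function. -/
noncomputable def limP : (ℕ → ℕ) →. (ℕ → ℕ) :=
  fun r => Part.mk (∀ n, ∃ N, ∀ m, N ≤ m → proj r m n = proj r N n)
    (fun h n => proj r (Classical.choose (h n)) n)

/-- The jump `(X′, δ′)` of a represented space: `δ′ := δ ∘ lim`. -/
noncomputable def jumpRep {X : Type*} (δ : RepSp X) : RepSp X where
  δ := fun p => (limP p).bind δ.δ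
  surj := by
    intro x
    obtain ⟨p, hp⟩ := δ.surj x
    refine ⟨fun m => p (Nat.unpair m).2, Part.mem_bind_iff.mpr ⟨p, ?_, hp⟩⟩
    have hproj : ∀ m, proj (fun m => p (Nat.unpair m).2) m = p := by
      intro m; funext k; simp [proj]
    have hdom : ∀ n, ∃ N, ∀ m, N ≤ m →
        proj (fun m => p (Nat.unpair m).2) m n = proj (fun m => p (Nat.unpair m).2) N n :=
      fun n => ⟨0, fun m _ => by rw [hproj m, hproj 0]⟩
    refine mem_part_mk hdom ?_
    funext n
    rw [hproj]

/-! ## Choice problems -/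

/-- The representation of subsets of `ℕ` by enumerations of their complements:
`p` is a name of `A` iff `p` enumerates (via `p m = n + 1`) exactly the `n ∉ A`. -/
def enumNegRep : RepSp (Set ℕ) where
  δ := fun p => Part.some {n | ∀ m, p m ≠ n + 1}
  surj := by
    intro S
    by_cases h : Sᶜ.Nonempty
    · obtain ⟨f, hf⟩ := (Set.to_countable Sᶜ).exists_eq_range h
      refine ⟨fun m => f m + 1, Part.mem_some_iff.mpr ?_⟩
      ext n
      simp only [Set.mem_setOf_eq]
      constructor
      · intro hn m hm
        have hfm : f m ∈ Sᶜ := by rw [hf]; exact ⟨m, rfl⟩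
        have hfmn : f m = n := by omega
        rw [hfmn] at hfm
        exact hfm hn
      · intro hn
        by_contra hS
        have hmem : n ∈ Sᶜ := hS
        rw [hf] at hmem
        obtain ⟨m, hm⟩ := hmem
        exact hn m (by omega)
    · refine ⟨fun _ => 0, Part.mem_some_iff.mpr ?_⟩
      have hS : S = Set.univ := by
        rw [← compl_compl S, Set.not_nonempty_iff_eq_empty.mp h, Set.compl_empty]
      rw [hS]
      ext n
      simp

/-- Choice on the natural numbers: given (a name of) a nonempty set `A ⊆ ℕ`,
find an element of `A`. -/
def CNat : Set ℕ → Set ℕ := fun A => A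

/-- Choice on the finite set `{0, …, k-1}`. -/
def CFin (k : ℕ) : Set ℕ → Set ℕ := fun A => {n | n ∈ A ∧ A ⊆ Set.Iio k}

/-- The limited principle of omniscience as a problem. -/
noncomputable def LPOProblem : (ℕ → ℕ) → Set ℕ :=
  fun p => {if ∃ k, p k = 0 then 1 else 0}


/-- Restriction of a problem on Baire space to a set `A`. -/
def restrictProblem (F : (ℕ → ℕ) → Set (ℕ → ℕ)) (A : Set (ℕ → ℕ)) :
    (ℕ → ℕ) → Set (ℕ → ℕ) :=
  fun p => {q | q ∈ F p ∧ p ∈ A}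

/-- A problem is a fractal if it has a representative on Baire space all of whose
restrictions to clopen sets meeting its domain are Weihrauch equivalent to it. -/
def Fractal {X Y : Type*} (δX : RepSp X) (δY : RepSp Y) (f : X → Set Y) : Prop :=
  ∃ F : (ℕ → ℕ) → Set (ℕ → ℕ),
    WEquiv repBaire repBaire δX δY F f ∧
    ∀ A : Set (ℕ → ℕ), IsClopen A → (A ∩ {p | (F p).Nonempty}).Nonempty →
      WEquiv repBaire repBaire repBaire repBaire (restrictProblem F A) F

/-- A problem `f` is densely realized if for every name `p` of an admissible instance
the set of names of solutions is dense in the domain of the output representation. -/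
def DenselyRealized {X Y : Type*} (δX : RepSp X) (δY : RepSp Y) (f : X → Set Y) : Prop :=
  ∀ p, ∀ x ∈ δX.δ p, (f x).Nonempty →
    {q : ℕ → ℕ | (δY.δ q).Dom} ⊆ closure {q : ℕ → ℕ | ∃ y ∈ δY.δ q, y ∈ f x}

/-- Turing reducibility on Baire space: `a` is computable from `b`. -/
def TRed (a b : ℕ → ℕ) : Prop := ∃ F, BaireComputable F ∧ a ∈ F b

/-- The two-point space `{p, q}` represented by the identity. -/
def pqRep (p q : ℕ → ℕ) : RepSp {r : ℕ → ℕ // r = p ∨ r = q} where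
  δ := fun r => Part.mk (r = p ∨ r = q) (fun h => ⟨r, h⟩)
  surj := fun x => ⟨x.1, Part.mem_mk_iff.mpr ⟨x.2, rfl⟩⟩

/-- The problem `m_A` associated with a set `A ⊆ ℕ`. -/
noncomputable def mProblem (p q : ℕ → ℕ) (A : Set ℕ) :
    ℕ → Set {r : ℕ → ℕ // r = p ∨ r = q} :=
  fun n => {y | y.1 = if n ∈ A then p else q}

/-- The join `A ⊕ B` of two sets of natural numbers. -/
def mJoin (A B : Set ℕ) : Set ℕ :=
  {k | (k % 2 = 0 ∧ k / 2 ∈ A) ∨ (k % 2 = 1 ∧ k / 2 ∈ B)}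

/-- The cardinality `#f` of a problem: the supremum of the cardinalities of sets
`M ⊆ dom f` whose images under `f` are pairwise disjoint. -/
noncomputable def problemCard {X Y : Type} (f : X → Set Y) : Cardinal :=
  sSup {c | ∃ M : Set X, (∀ x ∈ M, (f x).Nonempty) ∧ M.PairwiseDisjoint f ∧
    c = Cardinal.mk M}

/-- Computability of a problem: it has a computable realizer. -/
def ComputableProblem {X Y : Type*} (δX : RepSp X) (δY : RepSp Y) (f : X → Set Y) : Prop :=
  ∃ F, BaireComputable F ∧ Realizes δX δY f F

/-- The minimum function on Baire space. -/
def minProblem : (ℕ → ℕ) → Set ℕ :=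
  fun p => {n | n ∈ Set.range p ∧ ∀ m, n ≤ p m}

/-- The complementary minimum function `minᶜ`. -/
def mincProblem : (ℕ → ℕ) → Set ℕ :=
  fun p => {n | (∀ m, p m ≠ n) ∧ ∀ j, j < n → ∃ m, p m = j}

/-- The maximum function on Baire space (defined on bounded sequences). -/
def maxProblem : (ℕ → ℕ) → Set ℕ :=
  fun p => {n | n ∈ Set.range p ∧ ∀ m, p m ≤ n}

/-!
For `f ≤_sW f′`, send a name `p` to the constant sequence `⟨p, p, …⟩`, whose limit is `p`.
For monotonicity, a strong reduction via `H, K` works instance by instance: `K` turns a name of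
`x` into a name `r` of an instance `z` of `g`, and `H` turns every name of a solution of `z` into a
name of a solution of `x`. If the word function `ψ` computes `K` and `p′` converges to `p`, then
applying `ψ` to longer and longer prefixes of the terms of `p′` gives a computable sequence
converging to `K p`; so this lift of `K`, together with the same `H`, reduces `f′` to `g′`.
-/

lemma pref_eq_map_range (p : ℕ → ℕ) (m : ℕ) : pref p m = (List.range m).map p :=
  List.ext_getElem (by simp [pref]) fun i _ _ => by simp [pref]

@[simp] lemma length_pref (p : ℕ → ℕ) (m : ℕ) : (pref p m).length = m := by
  simp [pref]

lemma getElem?_pref {p : ℕ → ℕ} {m n : ℕ} (h : n < m) : (pref p m)[n]? = some (p n) := by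
  simp [pref, h]

lemma pref_succ (p : ℕ → ℕ) (m : ℕ) : pref p (m + 1) = pref p m ++ [p m] := by
  simp [pref_eq_map_range, List.range_succ]

lemma pref_congr {p p' : ℕ → ℕ} {m : ℕ} (h : ∀ k < m, p k = p' k) : pref p m = pref p' m := by
  simp only [pref_eq_map_range]
  exact List.map_congr_left fun k hk => h k (List.mem_range.mp hk)

lemma pref_prefix_pref (p : ℕ → ℕ) {m m' : ℕ} (h : m ≤ m') : pref p m <+: pref p m' := by
  rw [pref_eq_map_range, pref_eq_map_range, ← min_eq_left h, ← List.take_range, List.map_take]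
  exact List.take_prefix _ _

def extendByZero (u : List ℕ) : ℕ → ℕ := fun k => u.getD k 0

lemma extendByZero_pref {p : ℕ → ℕ} {m k : ℕ} (h : k < m) : extendByZero (pref p m) k = p k := by
  simp [extendByZero, List.getD_eq_getElem?_getD, getElem?_pref h]

lemma extendByZero_eq_of_prefix {u w : List ℕ} (h : u <+: w) {k : ℕ} (hk : k < u.length) :
    extendByZero u k = extendByZero w k := by
  simp [extendByZero, List.getD_eq_getElem?_getD, List.getElem?_eq_getElem hk,
    List.getElem?_eq_getElem (hk.trans_le h.length_le), h.getElem hk]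

lemma computable_pref {α : Type*} [Primcodable α] {v : α → ℕ → ℕ} {c : α → ℕ}
    (hv : Computable₂ v) (hc : Computable c) : Computable fun a => pref (v a) (c a) := by
  refine (Computable.nat_rec hc (Computable.const []) (Computable.list_concat.comp
    (Computable.snd.comp Computable.snd) (hv.comp Computable.fst
      (Computable.fst.comp Computable.snd))).to₂).of_eq fun a => ?_
  induction c a with
  | zero => rfl
  | succ m ih => simp only [pref_succ, ← ih]

def settledLength (b : ℕ → ℕ) (L : ℕ) : ℕ := (List.range L).findIdx fun n => L < b n

lemma lt_settledLength_iff {b : ℕ → ℕ} {L i : ℕ} :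
    i < settledLength b L ↔ i < L ∧ ∀ j ≤ i, b j ≤ L := by
  simp [settledLength, List.lt_findIdx_iff]

lemma settledLength_mono (b : ℕ → ℕ) : Monotone (settledLength b) := fun L L' hL => by
  by_contra! hlt
  obtain ⟨hi, hb⟩ := lt_settledLength_iff.mp hlt
  exact lt_irrefl _ (lt_settledLength_iff.mpr ⟨hi.trans_le hL, fun j hj => (hb j hj).trans hL⟩)

lemma primrec_settledLength {b : ℕ → ℕ} (hb : Primrec b) : Primrec (settledLength b) :=
  Primrec.list_findIdx Primrec.list_range
    (Primrec.nat_lt.comp Primrec.fst (hb.comp Primrec.snd)).decide.to₂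

theorem baireComputable_of_modulus {h : (ℕ → ℕ) → ℕ → ℕ} {b : ℕ → ℕ} (hb : Primrec b)
    (hmod : ∀ p p' n, (∀ k < b n, p k = p' k) → h p n = h p' n)
    (hv : Computable₂ fun (u : List ℕ) n => h (extendByZero u) n) :
    BaireComputable fun p => Part.some (h p) := by
  refine ⟨fun u => pref (h (extendByZero u)) (settledLength b u.length),
    computable_pref hv ((primrec_settledLength hb).comp Primrec.list_length).to_comp,
    fun u w huw => ?_, fun p q hq n => ?_⟩
  · have hagree : ∀ n < settledLength b u.length, h (extendByZero u) n = h (extendByZero w) n :=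
      fun n hn => hmod _ _ n fun k hk => extendByZero_eq_of_prefix huw
        (hk.trans_le ((lt_settledLength_iff.mp hn).2 n le_rfl))
    simp only [pref_congr hagree]
    exact pref_prefix_pref _ (settledLength_mono b huw.length_le)
  · obtain rfl := Part.mem_some_iff.mp hq
    set m := max (n + 1) ((Finset.range (n + 1)).sup b)
    have hn : n < settledLength b m := lt_settledLength_iff.mpr ⟨by omega, fun j hj =>
      (Finset.le_sup (Finset.mem_range.mpr (Nat.lt_succ_of_le hj))).trans (le_max_right _ _)⟩
    refine ⟨m, ?_⟩
    simp only [length_pref, getElem?_pref hn]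
    exact congrArg some (hmod _ _ n fun k hk => extendByZero_pref (hk.trans_le
      ((lt_settledLength_iff.mp hn).2 n le_rfl)))

open Filter in
lemma mem_limP_iff {r q : ℕ → ℕ} : q ∈ limP r ↔ ∀ n, ∀ᶠ m in atTop, proj r m n = q n := by
  refine ⟨fun h n => ?_, fun h => ?_⟩
  · obtain ⟨hconv, rfl⟩ := Part.mem_mk_iff.mp h
    exact eventually_atTop.mpr ⟨_, Classical.choose_spec (hconv n)⟩
  · have hconv : ∀ n, ∃ N, ∀ m, N ≤ m → proj r m n = proj r N n := fun n => by
      obtain ⟨N, hN⟩ := eventually_atTop.mp (h n)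
      exact ⟨N, fun m hm => (hN m hm).trans (hN N le_rfl).symm⟩
    refine Part.mem_mk_iff.mpr ⟨hconv, funext fun n => ?_⟩
    obtain ⟨m, hm, hNm⟩ := ((h n).and (eventually_ge_atTop (Classical.choose (hconv n)))).exists
    exact (Classical.choose_spec (hconv n) m hNm).symm.trans hm

lemma baireComputable_id : BaireComputable fun p => Part.some p :=
  ⟨id, Computable.id, fun _ _ h => h, fun p q hq n => ⟨n + 1, by
    obtain rfl := Part.mem_some_iff.mp hq
    exact getElem?_pref (Nat.lt_succ_self n)⟩⟩

def constSeq (p : ℕ → ℕ) : ℕ → ℕ := fun m => p m.unpair.2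

lemma mem_limP_constSeq (p : ℕ → ℕ) : p ∈ limP (constSeq p) :=
  mem_limP_iff.mpr fun n => Filter.Eventually.of_forall fun m => by simp [proj, constSeq]

lemma baireComputable_constSeq : BaireComputable fun p => Part.some (constSeq p) :=
  baireComputable_of_modulus (b := fun m => m.unpair.2 + 1)
    (Primrec.succ.comp (Primrec.snd.comp Primrec.unpair))
    (fun _ _ _ h => h _ (Nat.lt_succ_self _))
    ((Primrec.list_getD 0).comp Primrec.fst
      (Primrec.snd.comp (Primrec.unpair.comp Primrec.snd))).to_comp

def jumpLift (ψ : List ℕ → List ℕ) (r : ℕ → ℕ) : ℕ → ℕ :=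
  fun m => ((ψ (pref (proj r m.unpair.1) m.unpair.1))[m.unpair.2]?).getD 0

lemma proj_jumpLift (ψ : List ℕ → List ℕ) (r : ℕ → ℕ) (i n : ℕ) :
    proj (jumpLift ψ r) i n = ((ψ (pref (proj r i) i))[n]?).getD 0 := by
  simp [proj, jumpLift]

lemma baireComputable_jumpLift {ψ : List ℕ → List ℕ} (hψ : Computable ψ) :
    BaireComputable fun r => Part.some (jumpLift ψ r) := by
  refine baireComputable_of_modulus (b := fun m => Nat.pair m.unpair.1 m.unpair.1)
    (Primrec₂.natPair.comp (Primrec.fst.comp Primrec.unpair) (Primrec.fst.comp Primrec.unpair))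
    (fun p p' m h => ?_) ?_
  · have hpref : pref (proj p m.unpair.1) m.unpair.1 = pref (proj p' m.unpair.1) m.unpair.1 :=
      pref_congr fun k hk => h _ (Nat.pair_lt_pair_right _ hk)
    simp only [jumpLift, hpref]
  · have hpref : Computable fun a : List ℕ × ℕ =>
        pref (proj (extendByZero a.1) a.2.unpair.1) a.2.unpair.1 :=
      computable_pref ((Primrec.list_getD 0).comp (Primrec.fst.comp Primrec.fst)
        (Primrec₂.natPair.comp (Primrec.fst.comp (Primrec.unpair.comp
          (Primrec.snd.comp Primrec.fst))) Primrec.snd)).to_comp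
        (Primrec.fst.comp (Primrec.unpair.comp Primrec.snd)).to_comp
    exact Primrec.option_getD.to_comp.comp (Computable.list_getElem?.comp (hψ.comp hpref)
      (Primrec.snd.comp (Primrec.unpair.comp Primrec.snd)).to_comp) (Computable.const 0)

open Filter in
lemma mem_limP_jumpLift {ψ : List ℕ → List ℕ} (hmono : ∀ u v, u <+: v → ψ u <+: ψ v)
    {r p q : ℕ → ℕ} (hp : p ∈ limP r) (hq : ∀ n, ∃ m, (ψ (pref p m))[n]? = some (q n)) :
    q ∈ limP (jumpLift ψ r) := by
  refine mem_limP_iff.mpr fun n => ?_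
  obtain ⟨m, hm⟩ := hq n
  have hconv : ∀ᶠ i in atTop, ∀ k : Fin m, proj r i k = p k :=
    eventually_all.mpr fun k => mem_limP_iff.mp hp k
  filter_upwards [hconv, eventually_ge_atTop m] with i hi hmi
  have hpre : pref p m <+: pref (proj r i) i := by
    rw [pref_congr fun k hk => (hi ⟨k, hk⟩).symm]
    exact pref_prefix_pref _ hmi
  obtain ⟨hn, hmn⟩ := List.getElem?_eq_some_iff.mp hm
  rw [proj_jumpLift, List.prefix_iff_getElem?.mp (hmono _ _ hpre) n hn, hmn]
  rfl

section Realizers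

variable {X Y Z W : Type*} (δX : RepSp X) (δY : RepSp Y) (δZ : RepSp Z) (δW : RepSp W)
  (f : X → Set Y) (g : Z → Set W)

noncomputable def canonicalRealizer : (ℕ → ℕ) →. (ℕ → ℕ) := fun r =>
  Part.mk (∃ q, ∃ z ∈ δZ.δ r, ∃ w ∈ δW.δ q, w ∈ g z) Classical.choose

variable {δZ δW g} in
lemma exists_of_mem_canonicalRealizer {r q : ℕ → ℕ} (h : q ∈ canonicalRealizer δZ δW g r) :
    ∃ z ∈ δZ.δ r, ∃ w ∈ δW.δ q, w ∈ g z := by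
  obtain ⟨hdom, rfl⟩ := Part.mem_mk_iff.mp h
  exact Classical.choose_spec hdom

lemma realizes_canonicalRealizer : Realizes δZ δW g (canonicalRealizer δZ δW g) := by
  intro r z hz ⟨w, hw⟩
  obtain ⟨q, hq⟩ := δW.surj w
  have hdom : ∃ q, ∃ z ∈ δZ.δ r, ∃ w ∈ δW.δ q, w ∈ g z := ⟨q, z, hz, w, hq, hw⟩
  have hmem : Classical.choose hdom ∈ canonicalRealizer δZ δW g r := Part.mem_mk_iff.mpr ⟨hdom, rfl⟩
  obtain ⟨z', hz', w', hw', hgw'⟩ := exists_of_mem_canonicalRealizer hmem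
  exact ⟨_, hmem, w', hw', Part.mem_unique hz' hz ▸ hgw'⟩

variable {δZ δW g} in
lemma Realizes.update {G : (ℕ → ℕ) →. (ℕ → ℕ)} (hG : Realizes δZ δW g G) {r q : ℕ → ℕ}
    {z : Z} {w : W} (hz : z ∈ δZ.δ r) (hw : w ∈ δW.δ q) (hwg : w ∈ g z) :
    Realizes δZ δW g fun r' => if r' = r then Part.some q else G r' := by
  intro r' z' hz' hgz'
  by_cases hr : r' = r
  · subst hr
    exact ⟨q, by simp, w, hw, Part.mem_unique hz hz' ▸ hwg⟩
  · simpa [hr] using hG r' z' hz' hgz'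

def ReducesVia (H K : (ℕ → ℕ) →. (ℕ → ℕ)) : Prop :=
  ∀ p x, x ∈ δX.δ p → (f x).Nonempty → ∃ r ∈ K p, ∃ z ∈ δZ.δ r, (g z).Nonempty ∧
    ∀ q, ∀ w ∈ δW.δ q, w ∈ g z → ∃ s ∈ H q, ∃ y ∈ δY.δ s, y ∈ f x

variable {δX δY δZ δW f g}

theorem forall_realizes_comp_iff {H K : (ℕ → ℕ) →. (ℕ → ℕ)} :
    (∀ G : (ℕ → ℕ) →. (ℕ → ℕ), Realizes δZ δW g G →
      Realizes δX δY f (fun p => (K p).bind fun r => (G r).bind fun q => H q)) ↔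
    ReducesVia δX δY δZ δW f g H K := by
  refine ⟨fun hred p x hx hfx => ?_, fun hred G hG p x hx hfx => ?_⟩
  · obtain ⟨_, hs, -⟩ := hred _ (realizes_canonicalRealizer δZ δW g) p x hx hfx
    obtain ⟨r, hr, hs⟩ := Part.mem_bind_iff.mp hs
    obtain ⟨_, hq, -⟩ := Part.mem_bind_iff.mp hs
    obtain ⟨z, hz, w, -, hwg⟩ := exists_of_mem_canonicalRealizer hq
    refine ⟨r, hr, z, hz, ⟨w, hwg⟩, fun q w hw hwg => ?_⟩
    -- Only the value of the realizer at the name `r` matters, so it can be any name of a solution.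
    obtain ⟨s, hs, hy⟩ :=
      hred _ ((realizes_canonicalRealizer δZ δW g).update hz hw hwg) p x hx hfx
    obtain ⟨r', hr', hs⟩ := Part.mem_bind_iff.mp hs
    obtain rfl := Part.mem_unique hr' hr
    exact ⟨s, by simpa using hs, hy⟩
  · obtain ⟨r, hr, z, hz, hgz, hH⟩ := hred p x hx hfx
    obtain ⟨q, hq, w, hw, hwg⟩ := hG r z hz hgz
    obtain ⟨s, hs, hy⟩ := hH q w hw hwg
    exact ⟨s, Part.mem_bind_iff.mpr ⟨r, hr, Part.mem_bind_iff.mpr ⟨q, hq, hs⟩⟩, hy⟩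

theorem swRed_iff : SWRed δX δY δZ δW f g ↔ ∃ H K, BaireComputable H ∧ BaireComputable K ∧
    ReducesVia δX δY δZ δW f g H K := by
  simp only [SWRed, forall_realizes_comp_iff]

end Realizers

section Jump

variable {X Y Z W : Type*} {δX : RepSp X} {δY : RepSp Y} {δZ : RepSp Z} {δW : RepSp W}
  {f : X → Set Y} {g : Z → Set W}

lemma reducesVia_jumpRep_self :
    ReducesVia δX δY (jumpRep δX) δY f f (fun q => Part.some q) fun p => Part.some (constSeq p) :=
  fun p x hx hfx => ⟨constSeq p, Part.mem_some _, x,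
    Part.mem_bind_iff.mpr ⟨p, mem_limP_constSeq p, hx⟩, hfx,
    fun q w hw hwf => ⟨q, Part.mem_some _, w, hw, hwf⟩⟩

lemma ReducesVia.jumpRep {H K : (ℕ → ℕ) →. (ℕ → ℕ)} (h : ReducesVia δX δY δZ δW f g H K)
    {K' : (ℕ → ℕ) → (ℕ → ℕ)} (hK : ∀ p' p r, p ∈ limP p' → r ∈ K p → r ∈ limP (K' p')) :
    ReducesVia (jumpRep δX) δY (jumpRep δZ) δW f g H fun p' => Part.some (K' p') := by
  intro p' x hx hfx
  obtain ⟨p, hp, hx⟩ := Part.mem_bind_iff.mp hx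
  obtain ⟨r, hr, z, hz, hgz, hH⟩ := h p x hx hfx
  exact ⟨K' p', Part.mem_some _, z, Part.mem_bind_iff.mpr ⟨r, hK p' p r hp hr, hz⟩, hgz, hH⟩

end Jump

/-- the jump is monotone with respect to `≤_sW`. -/
theorem jump_monotone (X Y Z W : Type) (δX : RepSp X) (δY : RepSp Y)
    (δZ : RepSp Z) (δW : RepSp W) (f : X → Set Y) (g : Z → Set W) :
    SWRed δX δY (jumpRep δX) δY f f ∧
    (SWRed δX δY δZ δW f g → SWRed (jumpRep δX) δY (jumpRep δZ) δW f g) := by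
  refine ⟨swRed_iff.mpr ⟨_, _, baireComputable_id,
    baireComputable_constSeq, reducesVia_jumpRep_self⟩, fun hfg => ?_⟩
  obtain ⟨H, K, hH, ⟨ψ, hψ, hmono, hψK⟩, hred⟩ := swRed_iff.mp hfg
  exact swRed_iff.mpr ⟨H, _, hH, baireComputable_jumpLift hψ,
    hred.jumpRep fun _ p r hp hr => mem_limP_jumpLift hmono hp (hψK p r hr)⟩
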